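/- Let 𝔰 be a finite-dimensional simple complex Lie algebra of rank ≥ 2 with Cartan subalgebra 𝔥^𝔰 and positive roots Φ^+. Fix n ≥ 1, a finite-dimensional 𝔰-module V, a weight μ ∈ (𝔥^𝔰)*, and elements α_1,…,α_{n−1} ∈ Φ(𝔰) ∪ {0} such that μ + Σ_{i∈S} α_i ≠ 0 for every subset S ⊆ {1,…,n−1}. Then for any v ∈ V_μ and X_i ∈ 𝔰_{α_i} (the α_i-root space, or 𝔥^𝔰 if α_i = 0), the element X_1 X_2 ⋯ X_{n−1} ⊗ v lies in the image of D^n : S^n(𝔰) ⊗ V → S^{n−1}(𝔰) ⊗ V. -/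
import Mathlib


/- STATEMENT 14: Let 𝔰 be a finite-dimensional simple complex Lie algebra of rank ≥ 2 with
Cartan subalgebra H, V a finite-dimensional 𝔰-module, μ a weight, and α₁,…,α_{n−1} elements
of Φ(𝔰) ∪ {0} with μ + Σ_{i∈S} αᵢ ≠ 0 for all subsets S of {1,…,n−1}.  Then for v ∈ V_μ and
Xᵢ ∈ 𝔰_{αᵢ} (the αᵢ-root space, resp. H when αᵢ = 0), the element X₁⋯X_{n−1} ⊗ v lies in the
image of Dⁿ : Sⁿ(𝔰) ⊗ V → Sⁿ⁻¹(𝔰) ⊗ V (here n = m+1). -/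

open TensorProduct

noncomputable def symRel (n : ℕ) (M : Type) [AddCommGroup M] [Module ℂ M] :
    Submodule ℂ (⨂[ℂ]^n M) :=
  Submodule.span ℂ {x | ∃ (f : Fin n → M) (i j : Fin n),
    x = PiTensorProduct.tprod ℂ f - PiTensorProduct.tprod ℂ (f ∘ Equiv.swap i j)}

abbrev SymPow (n : ℕ) (M : Type) [AddCommGroup M] [Module ℂ M] :=
  (⨂[ℂ]^n M) ⧸ symRel n M

noncomputable def symProd (n : ℕ) (M : Type) [AddCommGroup M] [Module ℂ M] (f : Fin n → M) :
    SymPow n M := (symRel n M).mkQ (PiTensorProduct.tprod ℂ f)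

noncomputable def wtSpace (𝔥 V : Type) [LieRing 𝔥] [LieAlgebra ℂ 𝔥] [AddCommGroup V]
    [Module ℂ V] [LieRingModule 𝔥 V] [LieModule ℂ 𝔥 V] (μ : Module.Dual ℂ 𝔥) :
    Submodule ℂ V :=
  ⨅ H : 𝔥, Module.End.eigenspace (LieModule.toEnd ℂ 𝔥 V H) (μ H)

lemma symProd_swap (n : ℕ) (M : Type) [AddCommGroup M] [Module ℂ M]
    (f : Fin n → M) (i j : Fin n) :
    symProd n M (f ∘ Equiv.swap i j) = symProd n M f := by
  unfold symProd
  rw [Submodule.mkQ_apply, Submodule.mkQ_apply, Submodule.Quotient.eq]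
  have h : (PiTensorProduct.tprod ℂ f - PiTensorProduct.tprod ℂ (f ∘ Equiv.swap i j))
      ∈ symRel n M := Submodule.subset_span ⟨f, i, j, rfl⟩
  simpa [neg_sub] using (symRel n M).neg_mem h

lemma symProd_comp_perm (n : ℕ) (M : Type) [AddCommGroup M] [Module ℂ M]
    (σ : Equiv.Perm (Fin n)) : ∀ f : Fin n → M, symProd n M (f ∘ σ) = symProd n M f := by
  refine Equiv.Perm.swap_induction_on σ (fun f => by simp) ?_
  intro π x y hxy ih f
  have h : f ∘ ⇑(Equiv.swap x y * π) = (f ∘ Equiv.swap x y) ∘ π := by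
    funext k; simp [Equiv.Perm.mul_apply, Function.comp]
  rw [h, ih, symProd_swap]

lemma cons_succAbove {m : ℕ} {M : Type} (h₀ : M) (g : Fin m → M) (j : Fin m) :
    (Fin.cons h₀ g : Fin (m+1) → M) ∘ (j.succ).succAbove
      = (Function.update g j h₀) ∘ (j.cycleRange).symm := by
  cases m with
  | zero => exact j.elim0
  | succ m' =>
    funext k
    induction k using Fin.cases with
    | zero =>
      simp only [Function.comp_apply, Fin.succ_succAbove_zero, Fin.cons_zero]
      rw [Fin.cycleRange_symm_zero, Function.update_self]
    | succ k' =>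
      simp only [Function.comp_apply, Fin.succ_succAbove_succ, Fin.cons_succ]
      rw [Fin.cycleRange_symm_succ, Function.update_of_ne (Fin.succAbove_ne j k')]

lemma mem_wtSpace_iff {𝔥 V : Type} [LieRing 𝔥] [LieAlgebra ℂ 𝔥] [AddCommGroup V]
    [Module ℂ V] [LieRingModule 𝔥 V] [LieModule ℂ 𝔥 V] (μ : Module.Dual ℂ 𝔥) (v : V) :
    v ∈ wtSpace 𝔥 V μ ↔ ∀ h : 𝔥, ⁅h, v⁆ = μ h • v := by
  simp [wtSpace, Submodule.mem_iInf, Module.End.mem_eigenspace_iff,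
    LieModule.toEnd_apply_apply]

lemma lie_mem_wtSpace {𝔰 : Type} [LieRing 𝔰] [LieAlgebra ℂ 𝔰] (H : LieSubalgebra ℂ 𝔰)
    {V : Type} [AddCommGroup V] [Module ℂ V] [LieRingModule 𝔰 V] [LieModule ℂ 𝔰 V]
    {β ν : Module.Dual ℂ H} {Y : 𝔰} (hY : Y ∈ wtSpace H 𝔰 β) {w : V}
    (hw : w ∈ wtSpace H V ν) : ⁅Y, w⁆ ∈ wtSpace H V (ν + β) := by
  rw [mem_wtSpace_iff] at hY hw ⊢
  intro h
  have h1 : ⁅(h : 𝔰), Y⁆ = β h • Y := by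
    simpa [LieSubalgebra.coe_bracket_of_module] using hY h
  have h2 : ⁅(h : 𝔰), w⁆ = ν h • w := by
    simpa [LieSubalgebra.coe_bracket_of_module] using hw h
  rw [LieSubalgebra.coe_bracket_of_module, leibniz_lie, h1, h2, smul_lie, lie_smul, LinearMap.add_apply, add_smul, add_comm]

lemma exists_forall_ne_zero {ι E : Type} [DecidableEq ι] [AddCommGroup E] [Module ℂ E]
    (φ : ι → (E →ₗ[ℂ] ℂ)) :
    ∀ s : Finset ι, (∀ i ∈ s, φ i ≠ 0) → ∃ x : E, ∀ i ∈ s, φ i x ≠ 0 := by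
  intro s
  induction s using Finset.induction_on with
  | empty => exact fun _ => ⟨0, by simp⟩
  | @insert a s ha ih =>
    intro hφ
    obtain ⟨x, hx⟩ := ih fun i hi => hφ i (Finset.mem_insert_of_mem hi)
    have hφa : φ a ≠ 0 := hφ a (Finset.mem_insert_self a s)
    by_cases hax : φ a x ≠ 0
    · refine ⟨x, fun i hi => ?_⟩
      rcases Finset.mem_insert.1 hi with rfl | his
      · exact hax
      · exact hx i his
    · push_neg at hax
      obtain ⟨y, hy⟩ : ∃ y, φ a y ≠ 0 := by
        by_contra hcon; push_neg at hcon
        exact hφa (LinearMap.ext fun z => by simpa using hcon z)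
      obtain ⟨t, ht⟩ := Infinite.exists_notMem_finset
        (insert (0 : ℂ) (s.image fun i => -(φ i x) / (φ i y)))
      refine ⟨x + t • y, fun i hi => ?_⟩
      rcases Finset.mem_insert.1 hi with rfl | his
      · simp only [map_add, map_smul, hax, zero_add, smul_eq_mul]
        have ht0 : t ≠ 0 := fun h => ht (h ▸ Finset.mem_insert_self _ _)
        exact mul_ne_zero ht0 hy
      · simp only [map_add, map_smul, smul_eq_mul]
        by_cases hiy : φ i y = 0
        · simpa [hiy] using hx i his
        · intro hcon
          apply ht
          have heq : t = -(φ i x) / (φ i y) := by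
            rw [eq_div_iff hiy]; linear_combination hcon
          exact Finset.mem_insert_of_mem (Finset.mem_image.2 ⟨i, his, heq.symm⟩)

theorem statement14 (𝔰 : Type) [LieRing 𝔰] [LieAlgebra ℂ 𝔰] [FiniteDimensional ℂ 𝔰]
    [LieAlgebra.IsSimple ℂ 𝔰]
    (H : LieSubalgebra ℂ 𝔰) [H.IsCartanSubalgebra]
    (hrank : 2 ≤ Module.finrank ℂ H)
    (V : Type) [AddCommGroup V] [Module ℂ V] [LieRingModule 𝔰 V] [LieModule ℂ 𝔰 V]
    [FiniteDimensional ℂ V]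
    (m : ℕ)
    (μ : Module.Dual ℂ H)
    (α : Fin m → Module.Dual ℂ H)
    -- each αᵢ is either 0 or a root:
    (hroots : ∀ i, α i = 0 ∨ (α i ≠ 0 ∧ wtSpace H 𝔰 (α i) ≠ ⊥))
    -- μ + Σ_{i ∈ S} αᵢ ≠ 0 for every subset S:
    (hsum : ∀ S : Finset (Fin m), μ + ∑ i ∈ S, α i ≠ 0)
    -- Xᵢ lies in the αᵢ-root space (and in H if αᵢ = 0):
    (X : Fin m → 𝔰)
    (hX : ∀ i, X i ∈ wtSpace H 𝔰 (α i) ∧ (α i = 0 → X i ∈ H))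
    (v : V) (hv : v ∈ wtSpace H V μ)
    (D : (SymPow (m + 1) 𝔰 ⊗[ℂ] V) →ₗ[ℂ] SymPow m 𝔰 ⊗[ℂ] V)
    (hD : ∀ (f : Fin (m + 1) → 𝔰) (w : V),
      D (symProd (m + 1) 𝔰 f ⊗ₜ[ℂ] w) =
        ∑ i : Fin (m + 1), symProd m 𝔰 (f ∘ i.succAbove) ⊗ₜ[ℂ] ⁅f i, w⁆) :
    symProd m 𝔰 X ⊗ₜ[ℂ] v ∈ LinearMap.range D := by
  classical
  obtain ⟨h, hh⟩ := exists_forall_ne_zero (fun S : Finset (Fin m) => μ + ∑ i ∈ S, α i)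
    Finset.univ (fun S _ => hsum S)
  set h₀ : 𝔰 := (h : 𝔰) with hh₀
  have key : ∀ T : Finset (Fin m), ∀ w ∈ wtSpace H V (μ + ∑ i ∈ Tᶜ, α i),
      (symProd m 𝔰 (fun i => if i ∈ T then X i else h₀)) ⊗ₜ[ℂ] w ∈ LinearMap.range D := by
    intro T
    induction T using Finset.strongInduction with
    | _ T ih =>
      intro w hw
      set ν : Module.Dual ℂ H := μ + ∑ i ∈ Tᶜ, α i with hν
      set g : Fin m → 𝔰 := fun i => if i ∈ T then X i else h₀ with hg
      have hνh : ν h ≠ 0 := hh Tᶜ (Finset.mem_univ _)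
      have hbr : ⁅h₀, w⁆ = ν h • w := by
        simpa [LieSubalgebra.coe_bracket_of_module] using (mem_wtSpace_iff ν w).1 hw h
      have hDF := hD (Fin.cons h₀ g) w
      rw [Fin.sum_univ_succ] at hDF
      -- the 0-th term
      have hzero : (Fin.cons h₀ g : Fin (m+1) → 𝔰) ∘ (0 : Fin (m+1)).succAbove = g := by
        funext k; simp [Fin.succAbove_zero]
      rw [hzero, Fin.cons_zero, hbr] at hDF
      -- the successor terms
      have hsucc : ∀ j : Fin m,
          symProd m 𝔰 ((Fin.cons h₀ g : Fin (m+1) → 𝔰) ∘ (j.succ).succAbove) ⊗ₜ[ℂ]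
              ⁅(Fin.cons h₀ g : Fin (m+1) → 𝔰) j.succ, w⁆
            = symProd m 𝔰 (Function.update g j h₀) ⊗ₜ[ℂ] ⁅g j, w⁆ := by
        intro j
        rw [cons_succAbove, symProd_comp_perm, Fin.cons_succ]
      simp only [hsucc] at hDF
      -- split the sum over T and Tᶜ
      rw [← Finset.sum_add_sum_compl T
        (fun j => symProd m 𝔰 (Function.update g j h₀) ⊗ₜ[ℂ] ⁅g j, w⁆)] at hDF
      have hcompl : ∀ j ∈ Tᶜ,
          symProd m 𝔰 (Function.update g j h₀) ⊗ₜ[ℂ] ⁅g j, w⁆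
            = ν h • (symProd m 𝔰 g ⊗ₜ[ℂ] w) := by
        intro j hj
        have hgj : g j = h₀ := by simp [hg, (Finset.mem_compl.1 hj)]
        have hupd : Function.update g j h₀ = g := by
          rw [← hgj]; exact Function.update_eq_self j g
        rw [hupd, hgj, hbr, tmul_smul]
      rw [Finset.sum_congr rfl hcompl, Finset.sum_const] at hDF
      have hmemT : ∀ j ∈ T,
          symProd m 𝔰 (Function.update g j h₀) ⊗ₜ[ℂ] ⁅g j, w⁆ ∈ LinearMap.range D := by
        intro j hj
        have hgj : g j = X j := by simp [hg, hj]
        have hupd : Function.update g j h₀ =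
            fun i => if i ∈ T.erase j then X i else h₀ := by
          funext i
          by_cases hij : i = j
          · subst hij; simp [Function.update_self, Finset.mem_erase]
          · rw [Function.update_of_ne hij]
            simp [hg, Finset.mem_erase, hij]
        have hwt : ⁅X j, w⁆ ∈ wtSpace H V (μ + ∑ i ∈ (T.erase j)ᶜ, α i) := by
          have : μ + ∑ i ∈ (T.erase j)ᶜ, α i = ν + α j := by
            rw [Finset.compl_erase, Finset.sum_insert (by simp [hj]), hν]
            abel
          rw [this]
          exact lie_mem_wtSpace H (hX j).1 hw
        rw [hupd, hgj]
        exact ih (T.erase j) (Finset.erase_ssubset hj) _ hwt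
      -- rearrange
      have hc : ((Tᶜ.card : ℂ) + 1) * ν h ≠ 0 :=
        mul_ne_zero (Nat.cast_add_one_ne_zero Tᶜ.card) hνh
      have hmem : (((Tᶜ.card : ℂ) + 1) * ν h) • (symProd m 𝔰 g ⊗ₜ[ℂ] w)
          ∈ LinearMap.range D := by
        have hexp : (((Tᶜ.card : ℂ) + 1) * ν h) • (symProd m 𝔰 g ⊗ₜ[ℂ] w)
            = D (symProd (m+1) 𝔰 (Fin.cons h₀ g) ⊗ₜ[ℂ] w)
              - ∑ j ∈ T, symProd m 𝔰 (Function.update g j h₀) ⊗ₜ[ℂ] ⁅g j, w⁆ := by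
          rw [hDF, tmul_smul]
          have hns : Tᶜ.card • (ν h • (symProd m 𝔰 g ⊗ₜ[ℂ] w))
              = ((Tᶜ.card : ℂ) * ν h) • (symProd m 𝔰 g ⊗ₜ[ℂ] w) := by
            rw [← Nat.cast_smul_eq_nsmul ℂ, smul_smul]
          rw [hns, add_mul, one_mul, add_smul]
          abel
        rw [hexp]
        exact Submodule.sub_mem _ (LinearMap.mem_range_self D _)
          (Submodule.sum_mem _ hmemT)
      have := Submodule.smul_mem (LinearMap.range D) (((Tᶜ.card : ℂ) + 1) * ν h)⁻¹ hmem
      rwa [smul_smul, inv_mul_cancel₀ hc, one_smul] at this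
  have hXg : (fun i => if i ∈ (Finset.univ : Finset (Fin m)) then X i else h₀) = X := by
    funext i; simp
  have hμ : v ∈ wtSpace (↥H) V (μ + ∑ i ∈ (Finset.univ : Finset (Fin m))ᶜ, α i) := by
    simpa using hv
  have hfin := key Finset.univ v hμ
  rwa [hXg] at hfin
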